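/- Let F be a field of characteristic 2 and let β be a symmetric bilinear form on a finite-dimensional F-vector space V. Then the set G_F^0(β) = {0} ∪ {c ∈ F* : β ≅ cβ} is a subfield of F containing the subfield F² = {x² : x ∈ F} of squares; moreover, if β is not hyperbolic (i.e. β(x,x) ≠ 0 for some x ∈ V), then G_F^0(β) is a finite extension of F² (i.e. finite-dimensional as an F²-vector space). -/

import Mathlib

/-!
In characteristic 2 the diagonal `q x = β x x` of a symmetric form is additive, with
`q (t • x) = t ^ 2 * q x`, so its set of values `D(β)` is a finite-dimensional `F²`-subspace of
`F`. Closure of `G_F^0(β)` under products, inverses and squares is formal, and `c ∈ G_F^0(β)`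
gives `c q(x₀) ∈ D(β)`, so `G_F^0(β) ⊆ q(x₀)⁻¹ D(β)` is finite over `F²` once `q(x₀) ≠ 0`.

The content is closure under addition. Every `β` is isometric to `A ⊥ M(y) ⊥ 0`, where `A` is
anisotropic, `M(y)` is a sum of planes with Gram matrices `[[0, 1], [1, yᵢ]]`, and `y` is reduced:
no nonzero `yᵢ` is a value of the form obtained by replacing `yᵢ` with `0`. For fixed `A`, the form
`A ⊥ M(y)` is determined up to isometry by its values: a value can be moved into any plane whose
coordinate it involves, after which that plane is cancelled on both sides. A similitude `β ≅ c β`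
yields `c D(β) ⊆ D(β)` and an endomorphism `σ` of the orthogonal of the isotropic vectors that is
self-adjoint with `q ∘ σ = c q`; both conditions are additive in `c` because `q` is. Conversely,
on the reduced normal form, `σ` restricted to `A` satisfies `σ² = c` by anisotropy, so `c A ≅ A`;
`c D(β) = D(β)` by finite-dimensionality, and the cancellation gives `β ≅ c β`.
-/

/-- The set `G_F^0(β)` of similarity factors (together with `0`) of a bilinear form `β`. -/
def bilinSimFactors0 {F : Type*} [Field F] {V : Type*} [AddCommGroup V] [Module F V]
    (β : LinearMap.BilinForm F V) : Set F :=
  {0} ∪ {c : F | c ≠ 0 ∧ ∃ e : V ≃ₗ[F] V, ∀ x y : V, (c • β) (e x) (e y) = β x y}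

open LinearMap (BilinForm)

namespace LinearMap.BilinForm

universe u

def orthSum {R : Type*} [CommSemiring R] {V₁ V₂ : Type*} [AddCommMonoid V₁] [Module R V₁]
    [AddCommMonoid V₂] [Module R V₂] (B₁ : BilinForm R V₁) (B₂ : BilinForm R V₂) :
    BilinForm R (V₁ × V₂) :=
  B₁.compl₁₂ (LinearMap.fst R V₁ V₂) (LinearMap.fst R V₁ V₂) +
    B₂.compl₁₂ (LinearMap.snd R V₁ V₂) (LinearMap.snd R V₁ V₂)

local infixl:65 " ⊥ₒ " => orthSum

section OrthSum

variable {R : Type*} [CommSemiring R] {V₁ V₂ V₃ V₄ : Type*}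
  [AddCommMonoid V₁] [Module R V₁] [AddCommMonoid V₂] [Module R V₂]
  [AddCommMonoid V₃] [Module R V₃] [AddCommMonoid V₄] [Module R V₄]

@[simp] lemma orthSum_apply (B₁ : BilinForm R V₁) (B₂ : BilinForm R V₂) (x y : V₁ × V₂) :
    (B₁ ⊥ₒ B₂) x y = B₁ x.1 y.1 + B₂ x.2 y.2 := rfl

lemma equivalent_of_linearEquiv {B₁ : BilinForm R V₁} {B₂ : BilinForm R V₂} (e : V₁ ≃ₗ[R] V₂)
    (he : ∀ x y, B₂ (e x) (e y) = B₁ x y) : B₁.Equivalent B₂ :=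
  ⟨⟨e, he⟩⟩

variable {B₁ : BilinForm R V₁} {B₂ : BilinForm R V₂} {B₃ : BilinForm R V₃} {B₄ : BilinForm R V₄}

lemma Equivalent.orthSum (h₁ : B₁.Equivalent B₃) (h₂ : B₂.Equivalent B₄) :
    (B₁ ⊥ₒ B₂).Equivalent (B₃ ⊥ₒ B₄) := by
  obtain ⟨e₁⟩ := h₁
  obtain ⟨e₂⟩ := h₂
  exact equivalent_of_linearEquiv ((e₁ : V₁ ≃ₗ[R] V₃).prodCongr e₂) fun x y => by simp

lemma Equivalent.smul (c : R) (h : B₁.Equivalent B₂) : (c • B₁).Equivalent (c • B₂) := by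
  obtain ⟨e⟩ := h
  exact equivalent_of_linearEquiv (e : V₁ ≃ₗ[R] V₂) fun x y => by simp

lemma orthSum_comm_equivalent (B₁ : BilinForm R V₁) (B₂ : BilinForm R V₂) :
    (B₁ ⊥ₒ B₂).Equivalent (B₂ ⊥ₒ B₁) :=
  equivalent_of_linearEquiv (LinearEquiv.prodComm R V₁ V₂) fun x y => by simp [add_comm]

lemma orthSum_assoc_equivalent (B₁ : BilinForm R V₁) (B₂ : BilinForm R V₂)
    (B₃ : BilinForm R V₃) : (B₁ ⊥ₒ B₂ ⊥ₒ B₃).Equivalent (B₁ ⊥ₒ (B₂ ⊥ₒ B₃)) :=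
  equivalent_of_linearEquiv (LinearEquiv.prodAssoc R V₁ V₂ V₃) fun x y => by simp [add_assoc]

lemma orthSum_left_comm_equivalent (B₁ : BilinForm R V₁) (B₂ : BilinForm R V₂)
    (B₃ : BilinForm R V₃) : (B₁ ⊥ₒ (B₂ ⊥ₒ B₃)).Equivalent (B₂ ⊥ₒ (B₁ ⊥ₒ B₃)) :=
  ((orthSum_assoc_equivalent B₁ B₂ B₃).symm.trans
    ((orthSum_comm_equivalent B₁ B₂).orthSum (.refl B₃))).trans
    (orthSum_assoc_equivalent B₂ B₁ B₃)

lemma orthSum_right_comm_equivalent (B₁ : BilinForm R V₁) (B₂ : BilinForm R V₂)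
    (B₃ : BilinForm R V₃) : (B₁ ⊥ₒ B₂ ⊥ₒ B₃).Equivalent (B₁ ⊥ₒ B₃ ⊥ₒ B₂) :=
  ((orthSum_assoc_equivalent B₁ B₂ B₃).trans
    ((Equivalent.refl B₁).orthSum (orthSum_comm_equivalent B₂ B₃))).trans
    (orthSum_assoc_equivalent B₁ B₃ B₂).symm

lemma IsSymm.orthSum (h₁ : B₁.IsSymm) (h₂ : B₂.IsSymm) : (B₁ ⊥ₒ B₂).IsSymm :=
  ⟨fun x y => by simp [h₁.eq x.1 y.1, h₂.eq x.2 y.2]⟩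

lemma smul_orthSum (c : R) (B₁ : BilinForm R V₁) (B₂ : BilinForm R V₂) :
    c • (B₁ ⊥ₒ B₂) = c • B₁ ⊥ₒ c • B₂ := by
  refine LinearMap.ext₂ fun x y => ?_
  simp [mul_add]

lemma orthSum_equivalent_of_subsingleton [Subsingleton V₁] (B₁ : BilinForm R V₁)
    (B₂ : BilinForm R V₂) : (B₁ ⊥ₒ B₂).Equivalent B₂ :=
  have : Unique V₁ := uniqueOfSubsingleton 0
  equivalent_of_linearEquiv LinearEquiv.uniqueProd fun x y => by
    simp [LinearEquiv.uniqueProd, Subsingleton.elim x.1 0, Subsingleton.elim y.1 0]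

end OrthSum

section ValueSet

variable {R : Type*} [CommRing R] {V V₁ V₂ : Type*} [AddCommGroup V] [Module R V]
  [AddCommGroup V₁] [Module R V₁] [AddCommGroup V₂] [Module R V₂]

def valueSet (B : BilinForm R V) : Set R := Set.range fun v => B v v

lemma Equivalent.valueSet_eq {B₁ : BilinForm R V₁} {B₂ : BilinForm R V₂}
    (h : B₁.Equivalent B₂) : B₁.valueSet = B₂.valueSet := by
  obtain ⟨e⟩ := h
  ext x
  constructor
  · rintro ⟨v, rfl⟩
    exact ⟨e v, e.map_app v v⟩
  · rintro ⟨v, rfl⟩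
    exact ⟨e.symm v, e.symm.map_app v v⟩

lemma apply_smul_self (B : BilinForm R V) (c : R) (x : V) :
    B (c • x) (c • x) = c ^ 2 * B x x := by
  simp only [map_smul, smul_apply, smul_eq_mul]
  ring

variable [CharP R 2]

lemma IsSymm.apply_add_self {B : BilinForm R V} (hB : B.IsSymm) (x y : V) :
    B (x + y) (x + y) = B x x + B y y := by
  have hxy : B y x = B x y := hB.eq y x
  simp only [map_add, LinearMap.add_apply, hxy]
  linear_combination CharTwo.add_self_eq_zero (B x y)

lemma IsSymm.apply_sum_smul_self {B : BilinForm R V} (hB : B.IsSymm) {ι : Type*}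
    (s : Finset ι) (a : ι → R) (w : ι → V) :
    B (∑ i ∈ s, a i • w i) (∑ i ∈ s, a i • w i) = ∑ i ∈ s, a i ^ 2 * B (w i) (w i) := by
  classical
  induction s using Finset.induction with
  | empty => simp
  | insert i s hi ih =>
    rw [Finset.sum_insert hi, Finset.sum_insert hi, hB.apply_add_self, apply_smul_self, ih]

end ValueSet

section ValueSubmodule

variable {F : Type*} [Field F] [CharP F 2] {V : Type*} [AddCommGroup V] [Module F V]
  {β : BilinForm F V}

def valueSubmodule (hβ : β.IsSymm) : Submodule (_root_.frobenius F 2).fieldRange F where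
  carrier := β.valueSet
  zero_mem' := ⟨0, by simp⟩
  add_mem' := by
    rintro _ _ ⟨v, rfl⟩ ⟨w, rfl⟩
    exact ⟨v + w, hβ.apply_add_self v w⟩
  smul_mem' := by
    rintro ⟨_, t, rfl⟩ _ ⟨v, rfl⟩
    exact ⟨t • v, β.apply_smul_self t v⟩

instance [FiniteDimensional F V] (hβ : β.IsSymm) :
    FiniteDimensional (_root_.frobenius F 2).fieldRange (valueSubmodule hβ) := by
  let b := Module.finBasis F V
  let S := Submodule.span (_root_.frobenius F 2).fieldRange (Set.range fun i => β (b i) (b i))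
  have : FiniteDimensional _ S := FiniteDimensional.span_of_finite _ (Set.finite_range _)
  refine Submodule.finiteDimensional_of_le (S₂ := S) ?_
  rintro _ ⟨v, rfl⟩
  show β v v ∈ S
  rw [← b.sum_repr v, hβ.apply_sum_smul_self]
  exact Submodule.sum_mem _ fun i _ =>
    Submodule.smul_mem S (⟨_, b.repr v i, rfl⟩ : (_root_.frobenius F 2).fieldRange)
      (Submodule.subset_span ⟨i, rfl⟩)

theorem valueSet_smul_eq [FiniteDimensional F V] (hβ : β.IsSymm) {c : F} (hc : c ≠ 0)
    (hcD : ∀ x ∈ β.valueSet, c * x ∈ β.valueSet) : (c • β).valueSet = β.valueSet := by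
  refine Set.Subset.antisymm (fun _ ⟨v, hv⟩ => hv ▸ hcD _ ⟨v, rfl⟩) fun x hx => ?_
  let μ : valueSubmodule hβ →ₗ[_] valueSubmodule hβ := (LinearMap.mulLeft _ c).restrict hcD
  have hμ : Function.Injective μ := fun a b hab =>
    Subtype.ext (mul_left_cancel₀ hc (congrArg Subtype.val hab))
  obtain ⟨⟨_, w, rfl⟩, hw⟩ := LinearMap.injective_iff_surjective.1 hμ ⟨x, hx⟩
  exact ⟨w, congrArg Subtype.val hw⟩

end ValueSubmodule

section MetabolicPlanes

variable {R : Type*} [CommRing R] {V : Type*} [AddCommGroup V] [Module R V]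

def metPlane (z : R) : BilinForm R (R × R) :=
  LinearMap.mk₂ R (fun x y => x.1 * y.2 + x.2 * y.1 + z * x.2 * y.2)
    (by intros; simp only [Prod.fst_add, Prod.snd_add]; ring)
    (by intros; simp only [Prod.smul_fst, Prod.smul_snd, smul_eq_mul]; ring)
    (by intros; simp only [Prod.fst_add, Prod.snd_add]; ring)
    (by intros; simp only [Prod.smul_fst, Prod.smul_snd, smul_eq_mul]; ring)

@[simp] lemma metPlane_apply (z : R) (x y : R × R) :
    metPlane z x y = x.1 * y.2 + x.2 * y.1 + z * x.2 * y.2 := rfl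

lemma metPlane_isSymm (z : R) : (metPlane z).IsSymm :=
  ⟨fun x y => by simp only [metPlane_apply]; ring⟩

def metPlanes {ι : Type*} [Fintype ι] (z : ι → R) : BilinForm R (ι → R × R) :=
  ∑ i, (metPlane (z i)).compl₁₂ (LinearMap.proj i) (LinearMap.proj i)

@[simp] lemma metPlanes_apply {ι : Type*} [Fintype ι] (z : ι → R) (p q : ι → R × R) :
    metPlanes z p q = ∑ i, metPlane (z i) (p i) (q i) := by
  simp [metPlanes, LinearMap.sum_apply]

lemma metPlanes_isSymm {ι : Type*} [Fintype ι] (z : ι → R) : (metPlanes z).IsSymm :=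
  ⟨fun p q => by
    simp only [metPlanes_apply, metPlane_apply]
    exact Finset.sum_congr rfl fun i _ => by ring⟩

lemma metPlanes_apply_self [CharP R 2] {ι : Type*} [Fintype ι] (z : ι → R) (p : ι → R × R) :
    metPlanes z p p = ∑ i, z i * (p i).2 ^ 2 := by
  simp only [metPlanes_apply, metPlane_apply]
  refine Finset.sum_congr rfl fun i _ => ?_
  linear_combination CharTwo.add_self_eq_zero ((p i).1 * (p i).2)

lemma metPlane_equivalent_unit_sq_mul (u : Rˣ) (y : R) :
    (metPlane y).Equivalent (metPlane ((u : R) ^ 2 * y)) :=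
  equivalent_of_linearEquiv
    ((LinearEquiv.smulOfUnit u).prodCongr (LinearEquiv.smulOfUnit u⁻¹)) fun p q => by
    simp only [metPlane_apply, LinearEquiv.prodCongr_apply, LinearEquiv.smulOfUnit,
      DistribMulAction.toLinearEquiv_apply, Units.smul_def, smul_eq_mul]
    linear_combination (p.1 * q.2 + p.2 * q.1 + y * p.2 * q.2 * ((u : R) * ↑u⁻¹ + 1)) * u.mul_inv

lemma smul_metPlanes_equivalent {ι : Type*} [Fintype ι] (u : Rˣ) (z : ι → R) :
    ((u : R) • metPlanes z).Equivalent (metPlanes ((u : R) • z)) :=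
  equivalent_of_linearEquiv
    (LinearEquiv.piCongrRight fun _ => (LinearEquiv.smulOfUnit u).prodCongr (.refl R R))
    fun p q => by
    simp only [LinearEquiv.smulOfUnit, metPlanes_apply, metPlane_apply, smul_apply, smul_eq_mul,
      LinearEquiv.piCongrRight_apply, LinearEquiv.prodCongr_apply, LinearEquiv.refl_apply,
      DistribMulAction.toLinearEquiv_apply, Units.smul_def, Pi.smul_apply, Finset.mul_sum]
    exact Finset.sum_congr rfl fun i _ => by ring

lemma metPlanes_equivalent_removeNth {k : ℕ} (z : Fin (k + 1) → R) (i : Fin (k + 1)) :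
    (metPlanes z).Equivalent (metPlanes (i.removeNth z) ⊥ₒ metPlane (z i)) :=
  equivalent_of_linearEquiv
    { (Fin.insertNthEquiv (fun _ => R × R) i).symm.trans (Equiv.prodComm _ _) with
      map_add' := fun _ _ => rfl
      map_smul' := fun _ _ => rfl }
    fun p q => by
    simp [Fin.sum_univ_succAbove _ i, Fin.removeNth, add_comm]

lemma metPlane_orthSum_metPlanes_equivalent {k : ℕ} (y : R) (z : Fin k → R) :
    (metPlane y ⊥ₒ metPlanes z).Equivalent (metPlanes (Fin.cons y z : Fin (k + 1) → R)) := by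
  have h := metPlanes_equivalent_removeNth (Fin.cons y z : Fin (k + 1) → R) 0
  rw [Fin.removeNth_zero, Fin.tail_cons, Fin.cons_zero] at h
  exact (orthSum_comm_equivalent _ _).trans h.symm

lemma orthSum_metPlanes_equivalent_removeNth {k : ℕ} (A : BilinForm R V)
    (z : Fin (k + 1) → R) (i : Fin (k + 1)) :
    (A ⊥ₒ metPlanes z).Equivalent (A ⊥ₒ metPlanes (i.removeNth z) ⊥ₒ metPlane (z i)) :=
  ((Equivalent.refl A).orthSum (metPlanes_equivalent_removeNth z i)).trans
    (orthSum_assoc_equivalent _ _ _).symm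

lemma orthSum_metPlane_add_apply_self_equivalent {A : BilinForm R V} (hA : A.IsSymm) (w : V)
    (y : R) : (A ⊥ₒ metPlane (y + A w w)).Equivalent (A ⊥ₒ metPlane y) := by
  -- `(0, 0, 1)` goes to `(w, 0, 1)`, of square `A w w + y`; `V` is sheared to stay orthogonal
  refine equivalent_of_linearEquiv
    { toFun := fun p => (p.1 + p.2.2 • w, p.2.1 - A p.1 w, p.2.2)
      invFun := fun p => (p.1 - p.2.2 • w, p.2.1 + A (p.1 - p.2.2 • w) w, p.2.2)
      map_add' := fun p q => by ext <;> simp [add_smul] <;> abel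
      map_smul' := fun c p => by ext <;> simp [mul_smul, mul_sub]
      left_inv := fun p => by ext <;> simp
      right_inv := fun p => by ext <;> simp } fun p q => ?_
  have hw : A w q.1 = A q.1 w := hA.eq w q.1
  simp only [LinearEquiv.coe_mk, coe_mk, AddHom.coe_mk, orthSum_apply, metPlane_apply, map_add,
    map_sub, map_smul, LinearMap.add_apply, LinearMap.sub_apply, smul_apply, smul_eq_mul, hw]
  ring

end MetabolicPlanes

section Cancellation

variable {F : Type u} [Field F] [CharP F 2] {W : Type*} [AddCommGroup W] [Module F W]

lemma mem_valueSet_orthSum_metPlanes {ι : Type*} [Fintype ι] {A : BilinForm F W} {z : ι → F}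
    {x : F} :
    x ∈ (A ⊥ₒ metPlanes z).valueSet ↔ ∃ (u : W) (t : ι → F), A u u + ∑ i, z i * t i ^ 2 = x := by
  constructor
  · rintro ⟨⟨u, p⟩, rfl⟩
    exact ⟨u, fun i => (p i).2, by simp only [orthSum_apply, metPlanes_apply_self]⟩
  · rintro ⟨u, t, rfl⟩
    exact ⟨(u, fun i => (0, t i)), by simp only [orthSum_apply, metPlanes_apply_self]⟩

lemma valueSet_subset_orthSum_metPlanes {ι : Type*} [Fintype ι] (A : BilinForm F W)
    (z : ι → F) : A.valueSet ⊆ (A ⊥ₒ metPlanes z).valueSet := by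
  rintro _ ⟨u, rfl⟩
  exact mem_valueSet_orthSum_metPlanes.2 ⟨u, 0, by simp⟩

lemma valueSet_orthSum_metPlanes_zero {ι : Type*} [Fintype ι] (A : BilinForm F W) :
    (A ⊥ₒ metPlanes (0 : ι → F)).valueSet = A.valueSet := by
  refine (Set.Subset.antisymm ?_ (valueSet_subset_orthSum_metPlanes A 0))
  intro x hx
  obtain ⟨u, t, rfl⟩ := mem_valueSet_orthSum_metPlanes.1 hx
  exact ⟨u, by simp⟩

lemma mem_valueSet_orthSum_metPlanes_self {ι : Type*} [Fintype ι] [DecidableEq ι]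
    (A : BilinForm F W) (z : ι → F) (i : ι) : z i ∈ (A ⊥ₒ metPlanes z).valueSet :=
  mem_valueSet_orthSum_metPlanes.2 ⟨0, Pi.single i 1, by
    simp [Pi.single_apply]⟩

lemma valueSet_orthSum_metPlane_zero {V : Type*} [AddCommGroup V] [Module F V]
    (B : BilinForm F V) : (B ⊥ₒ metPlane 0).valueSet = B.valueSet := by
  ext x
  constructor
  · rintro ⟨⟨v, p⟩, rfl⟩
    exact ⟨v, by simp [CharTwo.add_self_eq_zero, mul_comm p.2 p.1]⟩
  · rintro ⟨v, rfl⟩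
    exact ⟨(v, 0), by simp⟩

variable {A : BilinForm F W}

lemma valueSet_orthSum_metPlanes_update_zero {k : ℕ} (A : BilinForm F W)
    (z : Fin (k + 1) → F) (i : Fin (k + 1)) :
    (A ⊥ₒ metPlanes (Function.update z i 0)).valueSet =
      (A ⊥ₒ metPlanes (i.removeNth z)).valueSet := by
  rw [(orthSum_metPlanes_equivalent_removeNth A _ i).valueSet_eq, Fin.removeNth_update,
    Function.update_self, valueSet_orthSum_metPlane_zero]

lemma orthSum_metPlanes_equivalent_of_add_mem {k : ℕ} (hA : A.IsSymm) (z : Fin (k + 1) → F)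
    (i : Fin (k + 1)) {y : F} (hy : z i + y ∈ (A ⊥ₒ metPlanes (i.removeNth z)).valueSet) :
    (A ⊥ₒ metPlanes z).Equivalent (A ⊥ₒ metPlanes (i.removeNth z) ⊥ₒ metPlane y) := by
  obtain ⟨w, hw : (A ⊥ₒ metPlanes (i.removeNth z)) w w = z i + y⟩ := hy
  have hzi : z i = y + (A ⊥ₒ metPlanes (i.removeNth z)) w w := by
    rw [hw]; linear_combination -CharTwo.add_self_eq_zero y
  refine (orthSum_metPlanes_equivalent_removeNth A z i).trans ?_
  rw [hzi]
  exact orthSum_metPlane_add_apply_self_equivalent (hA.orthSum (metPlanes_isSymm _)) w y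

def Reduced {ι : Type*} [Fintype ι] [DecidableEq ι] (A : BilinForm F W) (z : ι → F) : Prop :=
  ∀ i, z i = 0 ∨ z i ∉ (A ⊥ₒ metPlanes (Function.update z i 0)).valueSet

lemma exists_reduced_equivalent (hA : A.IsSymm) {k : ℕ} (z : Fin k → F) :
    ∃ y : Fin k → F, Reduced A y ∧ (A ⊥ₒ metPlanes z).Equivalent (A ⊥ₒ metPlanes y) := by
  classical
  induction hN : (Finset.univ.filter fun i => z i ≠ 0).card using Nat.strong_induction_on
    generalizing z with
  | _ N IH =>
  by_cases hred : Reduced A z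
  · exact ⟨z, hred, .refl _⟩
  simp only [Reduced, not_forall, not_or, not_not] at hred
  obtain ⟨i, hzi, hmem⟩ := hred
  obtain _ | k := k
  · exact i.elim0
  have hstep : (A ⊥ₒ metPlanes z).Equivalent (A ⊥ₒ metPlanes (Function.update z i 0)) := by
    rw [valueSet_orthSum_metPlanes_update_zero, ← add_zero (z i)] at hmem
    have h := orthSum_metPlanes_equivalent_removeNth A (Function.update z i 0) i
    rw [Fin.removeNth_update, Function.update_self] at h
    exact (orthSum_metPlanes_equivalent_of_add_mem hA z i hmem).trans h.symm
  have hsupp : (Finset.univ.filter fun j => Function.update z i 0 j ≠ 0) =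
      (Finset.univ.filter fun j => z j ≠ 0).erase i := by
    ext j
    by_cases hj : j = i <;> simp [hj]
  obtain ⟨y, hy, hequiv⟩ := IH _ (hN ▸ hsupp ▸ Finset.card_erase_lt_of_mem (by simpa using hzi))
    (Function.update z i 0) rfl
  exact ⟨y, hy, hstep.trans hequiv⟩

lemma Reduced.eq_zero {k : ℕ} {y : Fin k → F} (hy : Reduced A y)
    (h : (A ⊥ₒ metPlanes y).valueSet ⊆ A.valueSet) : y = 0 :=
  funext fun i => (hy i).resolve_right fun hn =>
    hn (valueSet_subset_orthSum_metPlanes A _ (h (mem_valueSet_orthSum_metPlanes_self A y i)))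

lemma add_mem_valueSet_orthSum_metPlanes_removeNth {k : ℕ} {z : Fin (k + 1) → F} {x : F}
    {u : W} {t : Fin (k + 1) → F} (hx : A u u + ∑ l, z l * t l ^ 2 = x) {i : Fin (k + 1)}
    (hti : t i ≠ 0) : z i + (t i)⁻¹ ^ 2 * x ∈ (A ⊥ₒ metPlanes (i.removeNth z)).valueSet := by
  refine mem_valueSet_orthSum_metPlanes.2
    ⟨(t i)⁻¹ • u, fun l => (t i)⁻¹ * t (i.succAbove l), ?_⟩
  have hsum : ∑ l, i.removeNth z l * ((t i)⁻¹ * t (i.succAbove l)) ^ 2 =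
      (t i)⁻¹ ^ 2 * ∑ l, z (i.succAbove l) * t (i.succAbove l) ^ 2 := by
    rw [Finset.mul_sum]
    exact Finset.sum_congr rfl fun l _ => by rw [Fin.removeNth]; ring
  have hti' : (t i)⁻¹ ^ 2 * t i ^ 2 = 1 := by rw [← mul_pow, inv_mul_cancel₀ hti, one_pow]
  rw [← hx, Fin.sum_univ_succAbove _ i, apply_smul_self, hsum]
  linear_combination (-z i) * hti' - CharTwo.add_self_eq_zero (z i)

lemma orthSum_metPlanes_equivalent_of_apply_self_eq (hA : A.IsSymm) {k : ℕ}
    (z : Fin (k + 1) → F) {x : F} {u : W} {t : Fin (k + 1) → F}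
    (hx : A u u + ∑ l, z l * t l ^ 2 = x) {i : Fin (k + 1)} (hti : t i ≠ 0) :
    (A ⊥ₒ metPlanes z).Equivalent (A ⊥ₒ metPlanes (i.removeNth z) ⊥ₒ metPlane x) := by
  refine (orthSum_metPlanes_equivalent_of_add_mem hA z i
    (add_mem_valueSet_orthSum_metPlanes_removeNth hx hti)).trans ((Equivalent.refl _).orthSum ?_)
  have h := metPlane_equivalent_unit_sq_mul (Units.mk0 (t i) hti) ((t i)⁻¹ ^ 2 * x)
  rwa [Units.val_mk0, ← mul_assoc, ← mul_pow, mul_inv_cancel₀ hti, one_pow, one_mul] at h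

end Cancellation

section Matching

variable {F : Type u} [Field F] [CharP F 2]

theorem orthSum_metPlanes_equivalent_of_valueSet_eq {W : Type u} [AddCommGroup W] [Module F W]
    {A : BilinForm F W} (hA : A.IsSymm) {k : ℕ} {z z' : Fin k → F}
    (h : (A ⊥ₒ metPlanes z).valueSet = (A ⊥ₒ metPlanes z').valueSet) :
    (A ⊥ₒ metPlanes z).Equivalent (A ⊥ₒ metPlanes z') := by
  induction k generalizing W with
  | zero => rw [Subsingleton.elim z z']
  | succ k ih =>
  obtain ⟨y, hy, hzy⟩ := exists_reduced_equivalent hA z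
  obtain ⟨y', hy', hzy'⟩ := exists_reduced_equivalent hA z'
  suffices (A ⊥ₒ metPlanes y).Equivalent (A ⊥ₒ metPlanes y') from
    (hzy.trans this).trans hzy'.symm
  have hD : (A ⊥ₒ metPlanes y).valueSet = (A ⊥ₒ metPlanes y').valueSet := by
    rw [← hzy.valueSet_eq, ← hzy'.valueSet_eq, h]
  obtain rfl | hy'0 := eq_or_ne y' 0
  · rw [hy.eq_zero (hD.trans (valueSet_orthSum_metPlanes_zero A)).le]
  obtain ⟨j, hj⟩ := Function.ne_iff.1 hy'0
  obtain ⟨u, t, hut⟩ :=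
    mem_valueSet_orthSum_metPlanes.1 (hD ▸ mem_valueSet_orthSum_metPlanes_self A y' j)
  -- split a plane of parameter `y' j` off both sides and recurse with `A ⊥ₒ metPlane (y' j)`
  obtain ⟨i, hti⟩ : ∃ i, t i ≠ 0 := by
    by_contra! ht
    refine (hy' j).resolve_left hj (valueSet_subset_orthSum_metPlanes A _ ⟨u, ?_⟩)
    simpa [ht] using hut
  have e := (orthSum_metPlanes_equivalent_of_apply_self_eq hA y hut hti).trans
    (orthSum_right_comm_equivalent _ _ _)
  have e' := (orthSum_metPlanes_equivalent_removeNth A y' j).trans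
    (orthSum_right_comm_equivalent _ _ _)
  refine e.trans ((ih (hA.orthSum (metPlane_isSymm _)) ?_).trans e'.symm)
  rw [← e.valueSet_eq, ← e'.valueSet_eq, hD]

end Matching

section SimilarityCondition

variable {F : Type*} [Field F] {V W : Type*} [AddCommGroup V] [Module F V] [AddCommGroup W]
  [Module F W]

def isotropicOrthogonal (β : BilinForm F V) : Submodule F V where
  carrier := {x | ∀ v, β v v = 0 → β v x = 0}
  add_mem' hx hy v hv := by simp [hx v hv, hy v hv]
  zero_mem' v _ := by simp
  smul_mem' c x hx v hv := by simp [hx v hv]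

lemma fst_mem_isotropicOrthogonal {V₁ V₂ : Type*} [AddCommGroup V₁] [Module F V₁]
    [AddCommGroup V₂] [Module F V₂] {B₁ : BilinForm F V₁} {B₂ : BilinForm F V₂}
    {r : V₁ × V₂} (hr : r ∈ (B₁ ⊥ₒ B₂).isotropicOrthogonal) : r.1 ∈ B₁.isotropicOrthogonal :=
  fun s hs => by simpa using hr (s, 0) (by simpa using hs)

def SimilarityCondition (β : BilinForm F V) (c : F) : Prop :=
  (∀ x ∈ β.valueSet, c * x ∈ β.valueSet) ∧
  ∃ σ : Module.End F β.isotropicOrthogonal,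
    LinearMap.IsSelfAdjoint (β.restrict β.isotropicOrthogonal) σ ∧
    ∀ x, β (σ x) (σ x) = c * β x x

lemma smul_equivalent_of_isSelfAdjoint {A : BilinForm F W} (hA : A.IsSymm)
    (hAn : A.toQuadraticMap.Anisotropic) {c : F} (hc : c ≠ 0) {σ : Module.End F W}
    (hσ : LinearMap.IsSelfAdjoint A σ) (hσq : ∀ u, A (σ u) (σ u) = c * A u u) :
    (c • A).Equivalent A := by
  have hsq : ∀ u, σ (σ u) = c • u := by
    intro u
    rw [← sub_eq_zero]
    refine hAn _ ?_
    have h₁ : A (σ (σ u)) u = c * A u u := by rw [hσ, hσq]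
    have h₂ : A u (σ (σ u)) = c * A u u := (hA.eq _ _).symm.trans h₁
    simp only [BilinMap.toQuadraticMap_apply, map_sub, map_smul, LinearMap.sub_apply,
      LinearMap.smul_apply, smul_eq_mul, hσq, h₁, h₂]
    ring
  refine equivalent_of_linearEquiv (LinearEquiv.ofLinearMap σ (c⁻¹ • σ) ?_ ?_) fun x y => ?_
  · ext u; simp [hsq, hc]
  · ext u; simp [hsq, hc]
  · show A (σ x) (σ y) = c * A x y
    rw [hσ, hsq, map_smul, smul_eq_mul]

lemma SimilarityCondition.smul_equivalent_of_orthSum {A : BilinForm F W} {R : BilinForm F V}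
    (hA : A.IsSymm) (hAn : A.toQuadraticMap.Anisotropic)
    (hAR : ∀ u r, A u u + R r r = 0 → u = 0)
    (hR : ∀ r ∈ R.isotropicOrthogonal, R r r = 0) {c : F} (hc : c ≠ 0)
    (h : (A ⊥ₒ R).SimilarityCondition c) : (c • A).Equivalent A := by
  obtain ⟨-, σ, hσ, hσq⟩ := h
  have hinl : ∀ u, (u, 0) ∈ (A ⊥ₒ R).isotropicOrthogonal := fun u v hv => by
    simp [hAR v.1 v.2 hv]
  have hsnd : ∀ w ∈ (A ⊥ₒ R).isotropicOrthogonal, R w.2 w.2 = 0 := fun w hw =>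
    hR w.2 fun s hs => by simpa using hw (0, s) (by simpa using hs)
  let ι : W →ₗ[F] (A ⊥ₒ R).isotropicOrthogonal := (LinearMap.inl F W V).codRestrict _ hinl
  have hι : ∀ u, (ι u : W × V) = (u, 0) := fun _ => rfl
  let σA : Module.End F W := LinearMap.fst F W V ∘ₗ Submodule.subtype _ ∘ₗ σ ∘ₗ ι
  have hσA : ∀ u u', A (σA u) u' = (A ⊥ₒ R) (σ (ι u)) (ι u') := fun u u' => by
    simp [σA, hι]
  refine smul_equivalent_of_isSelfAdjoint hA hAn hc (σ := σA) (fun u u' => ?_) fun u => ?_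
  · rw [hσA]
    exact (hσ (ι u) (ι u')).trans (by simp [σA, hι])
  · have h := hσq (ι u)
    rw [orthSum_apply, hsnd _ (σ (ι u)).2, add_zero] at h
    simpa [σA, hι] using h

variable [CharP F 2] {β : BilinForm F V}

lemma SimilarityCondition.add (hβ : β.IsSymm) {c d : F} (hc : β.SimilarityCondition c)
    (hd : β.SimilarityCondition d) : β.SimilarityCondition (c + d) := by
  obtain ⟨hcD, σ, hσ, hσq⟩ := hc
  obtain ⟨hdD, τ, hτ, hτq⟩ := hd
  refine ⟨fun x hx => ?_, σ + τ, hσ.add hτ, fun x => ?_⟩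
  · obtain ⟨v, hv⟩ := hcD x hx
    obtain ⟨w, hw⟩ := hdD x hx
    exact ⟨v + w, by simp only [hβ.apply_add_self, hv, hw, add_mul]⟩
  · rw [LinearMap.add_apply, Submodule.coe_add, hβ.apply_add_self, hσq, hτq, add_mul]

lemma similarityCondition_of_equivalent (hβ : β.IsSymm) {c : F} (hc : c ≠ 0)
    (h : β.Equivalent (c • β)) : β.SimilarityCondition c := by
  obtain ⟨e⟩ := h
  let g : V ≃ₗ[F] V := e.symm.toLinearEquiv
  have hg : ∀ x y, β (g x) (g y) = c * β x y := fun x y => e.symm.map_app y x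
  have hmaps : ∀ x ∈ β.isotropicOrthogonal, g x ∈ β.isotropicOrthogonal := by
    intro x hx v hv
    have hv' : β (g.symm v) (g.symm v) = 0 := by
      simpa [hv, hc] using hg (g.symm v) (g.symm v)
    simpa [hx _ hv'] using hg (g.symm v) x
  refine ⟨?_, (g : V →ₗ[F] V).restrict hmaps, fun x y => ?_, fun x => hg x x⟩
  · rintro _ ⟨v, rfl⟩
    exact ⟨g v, hg v v⟩
  · -- `g (g x) + c • x` is isotropic, hence orthogonal to `g y`
    have hiso : β (g (g x) + c • x) (g (g x) + c • x) = 0 := by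
      rw [hβ.apply_add_self, apply_smul_self, hg, hg]
      linear_combination CharTwo.add_self_eq_zero (c ^ 2 * β x x)
    have horth := hmaps y y.2 _ hiso
    rw [map_add, map_smul, LinearMap.add_apply, LinearMap.smul_apply, hg, smul_eq_mul] at horth
    refine mul_left_cancel₀ hc ?_
    show c * β (g x) y = c * β x (g y)
    linear_combination horth - CharTwo.add_self_eq_zero (c * β x (g y))

end SimilarityCondition

section Model

variable {F : Type u} [Field F] [CharP F 2]

lemma Reduced.eq_zero_of_add_eq_zero {W : Type*} [AddCommGroup W] [Module F W]
    {A : BilinForm F W} (hAn : A.toQuadraticMap.Anisotropic) {k : ℕ} {y : Fin k → F}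
    (hy : Reduced A y) {u : W} {p : Fin k → F × F} (h : A u u + metPlanes y p p = 0) :
    u = 0 := by
  rw [metPlanes_apply_self] at h
  have hterm : ∀ i, y i * (p i).2 ^ 2 = 0 := by
    intro i
    obtain _ | k := k
    · exact i.elim0
    by_contra hne
    refine (hy i).resolve_left (left_ne_zero_of_mul hne) ?_
    rw [valueSet_orthSum_metPlanes_update_zero]
    simpa using add_mem_valueSet_orthSum_metPlanes_removeNth h
      (pow_ne_zero_iff two_ne_zero |>.1 (right_ne_zero_of_mul hne))
  rw [Finset.sum_eq_zero fun i _ => hterm i, add_zero] at h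
  exact hAn u h

lemma metPlanes_apply_self_of_mem_isotropicOrthogonal {ι : Type*} [Fintype ι] [DecidableEq ι]
    {z : ι → F} {p : ι → F × F} (hp : p ∈ (metPlanes z).isotropicOrthogonal) :
    metPlanes z p p = 0 := by
  have hsnd : ∀ i, (p i).2 = 0 := fun i => by
    simpa [Pi.single_apply, apply_ite Prod.fst, apply_ite Prod.snd] using hp (Pi.single i (1, 0))
      (by rw [metPlanes_apply_self]; simp [Pi.single_apply, apply_ite Prod.snd])
  rw [metPlanes_apply_self]
  simp [hsnd]

theorem SimilarityCondition.equivalent_smul_of_reduced {W U : Type u} [AddCommGroup W]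
    [Module F W] [FiniteDimensional F W] [AddCommGroup U] [Module F U] [FiniteDimensional F U]
    {A : BilinForm F W} (hA : A.IsSymm) (hAn : A.toQuadraticMap.Anisotropic) {k : ℕ}
    {y : Fin k → F} (hy : Reduced A y) {c : F} (hc : c ≠ 0)
    (h : (A ⊥ₒ (metPlanes y ⊥ₒ (0 : BilinForm F U))).SimilarityCondition c) :
    (A ⊥ₒ (metPlanes y ⊥ₒ (0 : BilinForm F U))).Equivalent
      (c • (A ⊥ₒ (metPlanes y ⊥ₒ (0 : BilinForm F U)))) := by
  have hAc : (c • A).Equivalent A := h.smul_equivalent_of_orthSum hA hAn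
    (fun u r hr => hy.eq_zero_of_add_eq_zero hAn (p := r.1) (by simpa using hr))
    (fun r hr => by
      simpa using metPlanes_apply_self_of_mem_isotropicOrthogonal (fst_mem_isotropicOrthogonal hr))
    hc
  have hcM : (c • (A ⊥ₒ (metPlanes y ⊥ₒ (0 : BilinForm F U)))).Equivalent
      (A ⊥ₒ (metPlanes (c • y) ⊥ₒ (0 : BilinForm F U))) := by
    rw [smul_orthSum, smul_orthSum, smul_zero]
    exact hAc.orthSum ((smul_metPlanes_equivalent (Units.mk0 c hc) y).orthSum (.refl _))
  have hshuffle : ∀ z : Fin k → F, (A ⊥ₒ (metPlanes z ⊥ₒ (0 : BilinForm F U))).Equivalent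
      (A ⊥ₒ (0 : BilinForm F U) ⊥ₒ metPlanes z) := fun z =>
    (orthSum_assoc_equivalent _ _ _).symm.trans (orthSum_right_comm_equivalent _ _ _)
  have hsymm := hA.orthSum ((metPlanes_isSymm y).orthSum (isSymm_zero (M := U)))
  have hmatch := orthSum_metPlanes_equivalent_of_valueSet_eq (hA.orthSum isSymm_zero)
    (z := y) (z' := c • y) (by rw [← (hshuffle y).valueSet_eq, ← (hshuffle _).valueSet_eq,
      ← hcM.valueSet_eq, valueSet_smul_eq hsymm hc h.1])
  exact ((hshuffle y).trans (hmatch.trans (hshuffle _).symm)).trans hcM.symm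

end Model

section Decomposition

variable {F : Type*} [Field F] {V : Type*} [AddCommGroup V] [Module F V] {β : BilinForm F V}

lemma equivalent_restrict_orthSum_restrict (hβ : β.IsSymm) {P Q : Submodule F V}
    (h : IsCompl P Q) (horth : ∀ p ∈ P, ∀ q ∈ Q, β p q = 0) :
    β.Equivalent (β.restrict P ⊥ₒ β.restrict Q) := by
  refine (equivalent_of_linearEquiv (Submodule.prodEquivOfIsCompl P Q h) fun x y => ?_).symm
  have h₁ := horth _ x.1.2 _ y.2.2
  have h₂ := horth _ y.1.2 _ x.2.2
  rw [← hβ.eq] at h₂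
  simp [Submodule.coe_prodEquivOfIsCompl', h₁, h₂]

lemma exists_equivalent_compl₁₂_orthSum [FiniteDimensional F V] (hβ : β.IsSymm) {W : Type*}
    [AddCommGroup W] [Module F W] (f : W →ₗ[F] V)
    (hf : ∀ x, (∀ y, β (f x) (f y) = 0) → x = 0) :
    ∃ Q : Submodule F V, Module.finrank F Q + Module.finrank F W = Module.finrank F V ∧
      β.Equivalent (β.compl₁₂ f f ⊥ₒ β.restrict Q) := by
  have hinj : Function.Injective f := by
    refine (injective_iff_map_eq_zero f).2 fun x hx => hf x fun y => by simp [hx]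
  have hnd : (β.restrict (LinearMap.range f)).Nondegenerate := by
    refine ((hβ.restrict _).isRefl.nondegenerate_iff_separatingLeft).2 ?_
    rintro ⟨_, x, rfl⟩ hx
    simp [hf x fun y => hx ⟨f y, y, rfl⟩]
  have hcompl := isCompl_orthogonal_of_restrict_nondegenerate hβ.isRefl hnd
  refine ⟨β.orthogonal (LinearMap.range f), ?_, ?_⟩
  · rw [← LinearMap.finrank_range_of_inj hinj, add_comm, Submodule.finrank_add_eq_of_isCompl hcompl]
  · refine (equivalent_restrict_orthSum_restrict hβ hcompl fun p hp q hq => hq p hp).trans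
      (Equivalent.orthSum ?_ (.refl _))
    exact (equivalent_of_linearEquiv (LinearEquiv.ofInjective f hinj) fun x y => rfl).symm

lemma exists_equivalent_metPlane_orthSum [FiniteDimensional F V] (hβ : β.IsSymm) {v w : V}
    (hv : β v v = 0) (hvw : β v w = 1) :
    ∃ Q : Submodule F V, Module.finrank F Q + 2 = Module.finrank F V ∧
      β.Equivalent (metPlane (β w w) ⊥ₒ β.restrict Q) := by
  have hwv : β w v = 1 := (hβ.eq w v).trans hvw
  let f : F × F →ₗ[F] V := (LinearMap.fst F F F).smulRight v + (LinearMap.snd F F F).smulRight w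
  have hf : β.compl₁₂ f f = metPlane (β w w) := by
    refine LinearMap.ext₂ fun p q => ?_
    simp only [f, compl₁₂_apply, LinearMap.add_apply, coe_smulRight, fst_apply, snd_apply,
      map_add, map_smul, smul_apply, smul_eq_mul, hv, hvw, hwv, metPlane_apply]
    ring
  obtain ⟨Q, hQ, hequiv⟩ := exists_equivalent_compl₁₂_orthSum hβ f fun p hp => by
    have h₁ := hp (1, 0)
    have h₂ := hp (0, 1)
    simp only [← compl₁₂_apply, hf, metPlane_apply, mul_zero, mul_one, zero_add,
      add_zero] at h₁ h₂
    rw [h₁, mul_zero, add_zero] at h₂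
    exact Prod.ext h₂ h₁
  exact ⟨Q, by simpa using hQ, hf ▸ hequiv⟩

theorem exists_equivalent_anisotropic_orthSum [FiniteDimensional F V] (hβ : β.IsSymm) :
    ∃ (m k r : ℕ) (A : BilinForm F (Fin m → F)) (z : Fin k → F),
      A.IsSymm ∧ A.toQuadraticMap.Anisotropic ∧
      β.Equivalent (A ⊥ₒ (metPlanes z ⊥ₒ (0 : BilinForm F (Fin r → F)))) := by
  induction hn : Module.finrank F V using Nat.strong_induction_on generalizing V with
  | _ n ih =>
  by_cases hiso : ∃ v, β v v = 0 ∧ β v ≠ 0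
  · obtain ⟨v, hv, hv0⟩ := hiso
    obtain ⟨w, hw⟩ : ∃ w, β v w ≠ 0 := by
      by_contra! h
      exact hv0 (LinearMap.ext h)
    obtain ⟨Q, hQ, hequiv⟩ := exists_equivalent_metPlane_orthSum hβ hv
      (w := (β v w)⁻¹ • w) (by simp [hw])
    obtain ⟨m, k, r, A, z, hA, hAn, hQequiv⟩ :=
      ih _ (by omega) (hβ.restrict Q) rfl
    refine ⟨m, k + 1, r, A, Fin.cons (β ((β v w)⁻¹ • w) ((β v w)⁻¹ • w)) z, hA, hAn, ?_⟩
    refine (hequiv.trans ((Equivalent.refl _).orthSum hQequiv)).trans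
      ((orthSum_left_comm_equivalent _ _ _).trans ((Equivalent.refl A).orthSum ?_))
    exact (orthSum_assoc_equivalent _ _ _).symm.trans
      ((metPlane_orthSum_metPlanes_equivalent _ _).orthSum (.refl _))
  · push Not at hiso
    obtain ⟨U, hU⟩ := Submodule.exists_isCompl (LinearMap.ker β)
    have hsplit := equivalent_restrict_orthSum_restrict hβ hU.symm fun u _ x hx => by
      rw [← hβ.eq, LinearMap.mem_ker.1 hx]; rfl
    let eU := (Module.finBasis F U).equivFun.symm
    let eK := (Module.finBasis F (LinearMap.ker β)).equivFun
    refine ⟨_, 0, Module.finrank F (LinearMap.ker β),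
      (β.restrict U).comp eU.toLinearMap eU.toLinearMap, Fin.elim0,
      ⟨fun x y => (hβ.restrict U).eq _ _⟩, fun x hx => ?_, ?_⟩
    · have h0 : (eU x : V) ∈ LinearMap.ker β ⊓ U := ⟨hiso _ hx, (eU x).2⟩
      rw [hU.inf_eq_bot, Submodule.mem_bot, Submodule.coe_eq_zero] at h0
      exact eU.map_eq_zero_iff.1 h0
    refine hsplit.trans (Equivalent.orthSum ⟨isometryEquivOfCompLinearEquiv _ eU⟩ ?_)
    refine (equivalent_of_linearEquiv eK fun x y => ?_).trans
      (orthSum_equivalent_of_subsingleton _ _).symm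
    simp [LinearMap.mem_ker.1 x.2]

end Decomposition

theorem exists_equivalent_reduced_model {F : Type*} [Field F] [CharP F 2] {V : Type*}
    [AddCommGroup V] [Module F V] [FiniteDimensional F V] {β : BilinForm F V}
    (hβ : β.IsSymm) :
    ∃ (m k r : ℕ) (A : BilinForm F (Fin m → F)) (y : Fin k → F),
      A.IsSymm ∧ A.toQuadraticMap.Anisotropic ∧ Reduced A y ∧
      β.Equivalent (A ⊥ₒ (metPlanes y ⊥ₒ (0 : BilinForm F (Fin r → F)))) := by
  obtain ⟨m, k, r, A, z, hA, hAn, hequiv⟩ := exists_equivalent_anisotropic_orthSum hβ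
  obtain ⟨y, hy, hzy⟩ := exists_reduced_equivalent hA z
  refine ⟨m, k, r, A, y, hA, hAn, hy, hequiv.trans ?_⟩
  exact (orthSum_assoc_equivalent _ _ _).symm.trans
    ((hzy.orthSum (.refl _)).trans (orthSum_assoc_equivalent _ _ _))

end LinearMap.BilinForm

open LinearMap.BilinForm

section SimilarityFactors

variable {F : Type*} [Field F] {V : Type*} [AddCommGroup V] [Module F V]
  (β : LinearMap.BilinForm F V)

lemma mem_bilinSimFactors0_iff {c : F} :
    c ∈ bilinSimFactors0 β ↔ c = 0 ∨ c ≠ 0 ∧ β.Equivalent (c • β) :=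
  or_congr_right <| and_congr_right fun _ =>
    ⟨fun ⟨e, he⟩ => equivalent_of_linearEquiv e he, fun ⟨e⟩ => ⟨e.toLinearEquiv, e.map_app'⟩⟩

lemma bilinSimFactors0_eq_of_equivalent {V' : Type*} [AddCommGroup V'] [Module F V']
    {β' : LinearMap.BilinForm F V'} (h : β.Equivalent β') :
    bilinSimFactors0 β = bilinSimFactors0 β' := by
  ext c
  simp only [mem_bilinSimFactors0_iff]
  exact or_congr_right <| and_congr_right fun _ =>
    ⟨fun hc => (h.symm.trans hc).trans (h.smul c), fun hc => (h.trans hc).trans (h.smul c).symm⟩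

lemma zero_mem_bilinSimFactors0 : (0 : F) ∈ bilinSimFactors0 β := Or.inl rfl

lemma sq_mem_bilinSimFactors0 (t : F) : t ^ 2 ∈ bilinSimFactors0 β := by
  rcases eq_or_ne t 0 with rfl | ht
  · simpa using zero_mem_bilinSimFactors0 β
  refine (mem_bilinSimFactors0_iff β).2 <| .inr ⟨pow_ne_zero 2 ht,
    equivalent_of_linearEquiv (LinearEquiv.smulOfNeZero F V t⁻¹ (inv_ne_zero ht)) fun x y => ?_⟩
  simp only [LinearEquiv.smulOfNeZero_apply, map_smul, LinearMap.smul_apply, smul_eq_mul]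
  field_simp

lemma mul_mem_bilinSimFactors0 {a b : F} (ha : a ∈ bilinSimFactors0 β)
    (hb : b ∈ bilinSimFactors0 β) : a * b ∈ bilinSimFactors0 β := by
  rw [mem_bilinSimFactors0_iff] at *
  rcases ha with rfl | ⟨ha, hβa⟩
  · simp
  rcases hb with rfl | ⟨hb, hβb⟩
  · simp
  refine .inr ⟨mul_ne_zero ha hb, ?_⟩
  rw [mul_comm, ← smul_smul]
  exact hβb.trans (hβa.smul b)

lemma inv_mem_bilinSimFactors0 {a : F} (ha : a ∈ bilinSimFactors0 β) :
    a⁻¹ ∈ bilinSimFactors0 β := by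
  rw [mem_bilinSimFactors0_iff] at *
  rcases ha with rfl | ⟨ha, hβa⟩
  · simp
  refine .inr ⟨inv_ne_zero ha, ?_⟩
  simpa [smul_smul, ha] using (hβa.smul a⁻¹).symm

lemma mul_apply_self_mem_valueSet {c : F} (hc : c ∈ bilinSimFactors0 β) (v : V) :
    c * β v v ∈ β.valueSet := by
  rcases (mem_bilinSimFactors0_iff β).1 hc with rfl | ⟨-, ⟨e⟩⟩
  · exact ⟨0, by simp⟩
  exact ⟨e.symm v, by simp⟩

variable [CharP F 2] [FiniteDimensional F V] {β}

lemma add_mem_bilinSimFactors0 (hβ : β.IsSymm) {a b : F}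
    (ha : a ∈ bilinSimFactors0 β) (hb : b ∈ bilinSimFactors0 β) :
    a + b ∈ bilinSimFactors0 β := by
  obtain ⟨m, k, r, A, y, hA, hAn, hy, hequiv⟩ := exists_equivalent_reduced_model hβ
  have hM := hA.orthSum ((metPlanes_isSymm y).orthSum (isSymm_zero (M := Fin r → F)))
  rw [bilinSimFactors0_eq_of_equivalent β hequiv, mem_bilinSimFactors0_iff] at *
  rcases ha with rfl | ⟨ha, hMa⟩
  · simpa using hb
  rcases hb with rfl | ⟨hb, hMb⟩
  · simpa using Or.inr ⟨ha, hMa⟩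
  rcases eq_or_ne (a + b) 0 with hab | hab
  · exact .inl hab
  refine .inr ⟨hab, SimilarityCondition.equivalent_smul_of_reduced hA hAn hy hab ?_⟩
  exact (similarityCondition_of_equivalent hM ha hMa).add hM
    (similarityCondition_of_equivalent hM hb hMb)

def bilinSimFactors0Subfield (hβ : β.IsSymm) : Subfield F where
  carrier := bilinSimFactors0 β
  zero_mem' := zero_mem_bilinSimFactors0 β
  one_mem' := by simpa using sq_mem_bilinSimFactors0 β 1
  add_mem' := add_mem_bilinSimFactors0 hβ
  neg_mem' := by simp [CharTwo.neg_eq]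
  mul_mem' := mul_mem_bilinSimFactors0 β
  inv_mem' := fun _ => inv_mem_bilinSimFactors0 β

def bilinSimFactors0Submodule (hβ : β.IsSymm) : Submodule (frobenius F 2).fieldRange F where
  carrier := bilinSimFactors0 β
  zero_mem' := zero_mem_bilinSimFactors0 β
  add_mem' := add_mem_bilinSimFactors0 hβ
  smul_mem' := by
    rintro ⟨_, t, rfl⟩ c hc
    exact mul_mem_bilinSimFactors0 β (sq_mem_bilinSimFactors0 β t) hc

end SimilarityFactors

/-- for a symmetric bilinear form `β` over a field of characteristic 2, the set
`G_F^0(β)` is a subfield of `F` containing the field of squares `F²`; if `β` is not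
hyperbolic, it is a finite extension of `F²`. -/
theorem stmt_3 {F : Type*} [Field F] [CharP F 2]
    {V : Type*} [AddCommGroup V] [Module F V] [FiniteDimensional F V]
    (β : LinearMap.BilinForm F V) (hβ : β.IsSymm) :
    (∃ K : Subfield F, (K : Set F) = bilinSimFactors0 β ∧ ∀ x : F, x ^ 2 ∈ K) ∧
    ((∃ x : V, β x x ≠ 0) →
      ∃ W : Submodule (frobenius F 2).fieldRange F,
        (W : Set F) = bilinSimFactors0 β ∧
        FiniteDimensional (frobenius F 2).fieldRange W) := by
  refine ⟨⟨bilinSimFactors0Subfield hβ, rfl, sq_mem_bilinSimFactors0 β⟩, fun ⟨x₀, hx₀⟩ =>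
    ⟨bilinSimFactors0Submodule hβ, rfl, ?_⟩⟩
  refine Submodule.finiteDimensional_of_le
    (S₂ := (valueSubmodule hβ).map (LinearMap.mulLeft _ (β x₀ x₀)⁻¹)) fun c hc =>
    ⟨c * β x₀ x₀, mul_apply_self_mem_valueSet β hc x₀,
      by simp [inv_mul_cancel_left₀ hx₀, mul_comm c]⟩
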